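/- Let m ≥ 1 and l ≥ k ≥ 0 be natural numbers, and let π : ℝ^l_m → ℝ^k_m be the canonical projection of truncated polynomial algebras. Then the induced map on automorphism groups is surjective: for every ℝ-algebra automorphism τ of ℝ^k_m there exists an ℝ-algebra automorphism σ of ℝ^l_m such that π ∘ σ = τ ∘ π. -/

import Mathlib

noncomputable section

/-- The ideal of `ℝ[ξ₁,…,ξ_m]` generated by the variables. -/
def varIdeal (m : ℕ) : Ideal (MvPolynomial (Fin m) ℝ) :=
  Ideal.span (Set.range MvPolynomial.X)

/-- The truncated polynomial algebra `ℝ^l_m = ℝ[ξ₁,…,ξ_m]/𝔪^{l+1}`. -/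
abbrev TruncPolyAlg (m l : ℕ) : Type :=
  MvPolynomial (Fin m) ℝ ⧸ (varIdeal m) ^ (l + 1)

/-- The canonical projection `ℝ^l_m → ℝ^k_m` for `l ≥ k`, induced on the
quotients by the identity of the polynomial ring. -/
def truncProj (m l k : ℕ) (h : k ≤ l) : TruncPolyAlg m l →+* TruncPolyAlg m k :=
  Ideal.Quotient.factor (S := (varIdeal m) ^ (l + 1)) (T := (varIdeal m) ^ (k + 1))
    (Ideal.pow_le_pow_right (by omega))

/-!
Lift `τ` to an endomorphism `f` of `ℝ^l_m` by sending each `ξᵢ` to a preimage of `τ ξᵢ`. Such a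
preimage is nilpotent, hence lies in the maximal ideal `𝔪`, so the substitution kills `𝔪^{l+1}`.
Lifting `τ⁻¹` in the same way to `g`, the composites `g ∘ f` and `f ∘ g` induce the identity on
`ℝ^k_m`, so for `k ≥ 1` they are congruent to the identity modulo `𝔪^{k+1} ⊆ 𝔪²`. An endomorphism
`h` of this kind is bijective: `1 - h` raises the `𝔪`-adic order, hence is nilpotent. For `k = 0`,
`ℝ^0_m = ℝ` has no automorphism but the identity.
-/

section NilpotentIdeal

variable {R A : Type*} [CommRing R] [CommRing A] [Algebra R A] {M : Ideal A}

theorem RingHom.sub_apply_mem_pow_succ_of_forall_sub_mem_sq (h : A →+* A)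
    (hh : ∀ x, h x - x ∈ M ^ 2) : ∀ n, ∀ c ∈ M ^ n, c - h c ∈ M ^ (n + 1) := by
  have hsub : ∀ x, x - h x ∈ M ^ 2 := fun x => by simpa using neg_mem (hh x)
  intro n
  induction n with
  | zero => exact fun c _ => Ideal.pow_le_pow_right (by norm_num) (hsub c)
  | succ n ih =>
    intro c hc
    rw [pow_succ] at hc
    refine Submodule.mul_induction_on hc (fun x hx y hy => ?_) (fun x y hx hy => ?_)
    · have hhx : h x ∈ M ^ n := by
        simpa using sub_mem hx (Ideal.pow_le_pow_right n.le_succ (ih x hx))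
      have hxy : x * y - h (x * y) = (x - h x) * y + h x * (y - h y) := by
        rw [map_mul]; ring
      rw [hxy]
      refine add_mem ?_ ?_
      · exact pow_succ M (n + 1) ▸ Ideal.mul_mem_mul (ih x hx) hy
      · exact (pow_add M n 2).symm ▸ Ideal.mul_mem_mul hhx (hsub y)
    · simpa [map_add, add_sub_add_comm] using add_mem hx hy

theorem AlgHom.bijective_of_forall_sub_mem_sq {N : ℕ} (hM : M ^ N = ⊥) (h : A →ₐ[R] A)
    (hh : ∀ x, h x - x ∈ M ^ 2) : Function.Bijective h := by
  set u : Module.End R A := 1 - h.toLinearMap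
  have hu : ∀ n x, (u ^ n) x ∈ M ^ n := by
    intro n
    induction n with
    | zero => simp
    | succ n ih =>
      intro x
      rw [pow_succ' u n, Module.End.mul_apply]
      exact (h : A →+* A).sub_apply_mem_pow_succ_of_forall_sub_mem_sq hh n _ (ih x)
  have hnil : IsNilpotent u := ⟨N, LinearMap.ext fun x => by simpa [hM] using hu N x⟩
  have hunit : IsUnit h.toLinearMap := by simpa [u] using hnil.isUnit_one_sub
  exact (Module.End.isUnit_iff _).1 hunit

end NilpotentIdeal

theorem varIdeal_eq_ker_constantCoeff (m : ℕ) :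
    varIdeal m = RingHom.ker (MvPolynomial.constantCoeff (R := ℝ) (σ := Fin m)) := by
  ext p
  rw [← pow_one (varIdeal m), varIdeal, MvPolynomial.mem_pow_idealOfVars_iff']
  simp [Finsupp.degree_eq_zero_iff, MvPolynomial.constantCoeff_eq]

theorem map_varIdeal_aeval_le {A : Type*} [CommRing A] [Algebra ℝ A] {K : Ideal A}
    {m : ℕ} {y : Fin m → A} (hy : ∀ i, y i ∈ K) : (varIdeal m).map (MvPolynomial.aeval y) ≤ K :=
  Ideal.map_le_iff_le_comap.2 <| Ideal.span_le.2 <| Set.range_subset_iff.2 fun i => by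
    simpa using hy i

namespace TruncPolyAlg

open MvPolynomial

variable {m l k : ℕ}

def maxIdeal (m l : ℕ) : Ideal (TruncPolyAlg m l) :=
  (varIdeal m).map (Ideal.Quotient.mk _)

instance maxIdeal_isPrime : (maxIdeal m l).IsPrime := by
  have : (varIdeal m).IsPrime := varIdeal_eq_ker_constantCoeff m ▸ RingHom.ker_isPrime _
  refine Ideal.map_isPrime_of_surjective Ideal.Quotient.mk_surjective ?_
  rw [Ideal.mk_ker]
  exact Ideal.pow_le_self l.succ_ne_zero

theorem maxIdeal_pow_eq_bot : maxIdeal m l ^ (l + 1) = ⊥ := by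
  rw [maxIdeal, ← Ideal.map_pow, Ideal.map_quotient_self]

theorem mk_X_mem_maxIdeal (i : Fin m) : Ideal.Quotient.mk _ (X i) ∈ maxIdeal m l :=
  Ideal.mem_map_of_mem _ (Ideal.subset_span ⟨i, rfl⟩)

theorem ker_truncProj (h : k ≤ l) : RingHom.ker (truncProj m l k h) = maxIdeal m l ^ (k + 1) := by
  rw [truncProj, Ideal.Quotient.factor_ker, maxIdeal, Ideal.map_pow]

theorem truncProj_surjective (h : k ≤ l) : Function.Surjective (truncProj m l k h) :=
  Ideal.Quotient.factor_surjective _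

theorem exists_mem_maxIdeal_truncProj_eq (h : k ≤ l) (τ : TruncPolyAlg m k →ₐ[ℝ] TruncPolyAlg m k)
    (i : Fin m) : ∃ y ∈ maxIdeal m l, truncProj m l k h y = τ (Ideal.Quotient.mk _ (X i)) := by
  obtain ⟨y, hy⟩ := truncProj_surjective h (τ (Ideal.Quotient.mk _ (X i)))
  refine ⟨y, ?_, hy⟩
  have hXk : (Ideal.Quotient.mk _ (X i) : TruncPolyAlg m k) ^ (k + 1) = 0 := by
    simpa [← Ideal.mem_bot, ← maxIdeal_pow_eq_bot] using Ideal.pow_mem_pow (mk_X_mem_maxIdeal i) _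
  have hyk : y ^ (k + 1) ∈ RingHom.ker (truncProj m l k h) := by
    rw [RingHom.mem_ker, map_pow, hy, ← map_pow, hXk, map_zero]
  rw [ker_truncProj] at hyk
  exact maxIdeal_isPrime.mem_of_pow_mem _ (Ideal.pow_le_self k.succ_ne_zero hyk)

theorem exists_algHom_truncProj_apply_eq (h : k ≤ l)
    (τ : TruncPolyAlg m k →ₐ[ℝ] TruncPolyAlg m k) :
    ∃ f : TruncPolyAlg m l →ₐ[ℝ] TruncPolyAlg m l,
      ∀ x, truncProj m l k h (f x) = τ (truncProj m l k h x) := by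
  choose y hyM hyπ using exists_mem_maxIdeal_truncProj_eq h τ
  have hker : ∀ P ∈ varIdeal m ^ (l + 1), aeval y P = 0 := by
    intro P hP
    have := Ideal.pow_right_mono (map_varIdeal_aeval_le hyM) (l + 1)
      (Ideal.map_pow (aeval y) (varIdeal m) (l + 1) ▸ Ideal.mem_map_of_mem (aeval y) hP)
    rwa [maxIdeal_pow_eq_bot, Ideal.mem_bot] at this
  refine ⟨Ideal.Quotient.liftₐ _ (aeval y) hker, fun x => ?_⟩
  have : (Ideal.Quotient.factorₐ ℝ (Ideal.pow_le_pow_right (by omega))).comp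
      (Ideal.Quotient.liftₐ _ (aeval y) hker) =
      τ.comp (Ideal.Quotient.factorₐ ℝ (Ideal.pow_le_pow_right (by omega))) :=
    Ideal.Quotient.algHom_ext ℝ <| MvPolynomial.algHom_ext fun i => by
      show truncProj m l k h (aeval y (X i)) = _
      rw [aeval_X, hyπ i]; rfl
  exact DFunLike.congr_fun this x

theorem bijective_of_truncProj_apply_eq (h : k ≤ l) (hk : 1 ≤ k)
    (g : TruncPolyAlg m l →ₐ[ℝ] TruncPolyAlg m l)
    (hg : ∀ x, truncProj m l k h (g x) = truncProj m l k h x) :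
    Function.Bijective g := by
  refine g.bijective_of_forall_sub_mem_sq maxIdeal_pow_eq_bot fun x => ?_
  have hx : g x - x ∈ RingHom.ker (truncProj m l k h) := by
    rw [RingHom.mem_ker, map_sub, hg, sub_self]
  rw [ker_truncProj] at hx
  exact Ideal.pow_le_pow_right (by omega) hx

theorem algHom_ext_zero {A : Type*} [Semiring A] [Algebra ℝ A] (f g : TruncPolyAlg m 0 →ₐ[ℝ] A) :
    f = g := by
  refine Ideal.Quotient.algHom_ext ℝ <| MvPolynomial.algHom_ext fun i => ?_
  have hX : Ideal.Quotient.mkₐ ℝ (varIdeal m ^ (0 + 1)) (X i) = 0 := by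
    simpa [← Ideal.mem_bot, ← maxIdeal_pow_eq_bot (l := 0)] using mk_X_mem_maxIdeal (l := 0) i
  simp only [AlgHom.comp_apply, hX, map_zero]

end TruncPolyAlg

theorem truncProj_automorphism_surjective_general (m l k : ℕ) (hkl : k ≤ l)
    (τ : TruncPolyAlg m k ≃ₐ[ℝ] TruncPolyAlg m k) :
    ∃ σ : TruncPolyAlg m l ≃ₐ[ℝ] TruncPolyAlg m l,
      ∀ x : TruncPolyAlg m l,
        truncProj m l k hkl (σ x) = τ (truncProj m l k hkl x) := by
  rcases Nat.eq_zero_or_pos k with rfl | hk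
  · exact ⟨.refl, fun x =>
      DFunLike.congr_fun (TruncPolyAlg.algHom_ext_zero (AlgHom.id ℝ _) τ.toAlgHom) _⟩
  obtain ⟨f, hf⟩ := TruncPolyAlg.exists_algHom_truncProj_apply_eq hkl τ.toAlgHom
  obtain ⟨g, hg⟩ := TruncPolyAlg.exists_algHom_truncProj_apply_eq hkl τ.symm.toAlgHom
  have hgf := TruncPolyAlg.bijective_of_truncProj_apply_eq hkl hk (g.comp f) fun _ => by
    simp [hf, hg]
  have hfg := TruncPolyAlg.bijective_of_truncProj_apply_eq hkl hk (f.comp g) fun _ => by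
    simp [hf, hg]
  exact ⟨.ofBijective f ⟨hgf.injective.of_comp (f := g), hfg.surjective.of_comp (f := f)⟩, hf⟩

/-- For `m ≥ 1` and `l ≥ k ≥ 0`, the map induced by the
canonical projection `π : ℝ^l_m → ℝ^k_m` on the groups of ℝ-algebra
automorphisms is surjective: every automorphism `τ` of `ℝ^k_m` lifts to an
automorphism `σ` of `ℝ^l_m` with `π ∘ σ = τ ∘ π`. -/
theorem truncProj_automorphism_surjective (m l k : ℕ) (hm : 1 ≤ m) (hkl : k ≤ l)
    (τ : TruncPolyAlg m k ≃ₐ[ℝ] TruncPolyAlg m k) :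
    ∃ σ : TruncPolyAlg m l ≃ₐ[ℝ] TruncPolyAlg m l,
      ∀ x : TruncPolyAlg m l,
        truncProj m l k hkl (σ x) = τ (truncProj m l k hkl x) :=
  truncProj_automorphism_surjective_general m l k hkl τ
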